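/- Let S be a set of odd primes (2 ∉ S), and define ψ(d) = φ(Q_d)·μ(ℓ_d) with Q_d the S-part and ℓ_d the S-free part of d. Then for every positive integer n, ∑_{d|n} ψ(d)·(-1)^{n/d} equals: -n if n ∈ P(S); n if n is even and n/2 ∈ P(S); and 0 otherwise. -/

import Mathlib

/-!
Since `Spart` is multiplicative on coprime arguments, `ψ d = φ (Spart S d) * μ (d / Spart S d)` is a
multiplicative arithmetic function, and on a prime power `p ^ k` (`k ≥ 1`) its divisor sum is
`∑ φ = p ^ k` if `p ∈ S` and `∑ μ = 0` otherwise. Hence `∑_{d ∣ n} ψ d` is `n` for `n ∈ P(S)` and `0`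
otherwise. Writing `(-1) ^ (n / d) = 2 [2 ∣ n / d] - 1` and noting that `d ∣ n` with `n / d` even
means `d ∣ n / 2`, the signed sum becomes `2 [n even] ∑_{d ∣ n/2} ψ d - ∑_{d ∣ n} ψ d`; as `2 ∉ S`,
an even `n` never lies in `P(S)`.
-/

open ArithmeticFunction Finset

/-- The `S`-part of `d`: the largest divisor of `d` all of whose prime factors lie in `S`. -/
def Spart (S : Set ℕ) [DecidablePred (· ∈ S)] (d : ℕ) : ℕ :=
  ∏ p ∈ d.primeFactors.filter (· ∈ S), p ^ d.factorization p

open scoped ArithmeticFunction.zeta ArithmeticFunction.Moebius Nat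

section Spart

variable (S : Set ℕ) [DecidablePred (· ∈ S)]

theorem Spart_eq_factorization_prod (d : ℕ) :
    Spart S d = d.factorization.prod fun p k => if p ∈ S then p ^ k else 1 := by
  rw [Spart, prod_filter, Finsupp.prod, Nat.support_factorization]

theorem Spart_dvd (d : ℕ) : Spart S d ∣ d := by
  rcases eq_or_ne d 0 with rfl | hd
  · exact dvd_zero _
  conv_rhs => rw [← Nat.prod_factorization_pow_eq_self hd]
  rw [Finsupp.prod, Nat.support_factorization]
  exact prod_dvd_prod_of_subset _ _ _ (filter_subset _ _)

theorem Spart_mul {m n : ℕ} (hmn : m.Coprime n) : Spart S (m * n) = Spart S m * Spart S n := by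
  simp only [Spart_eq_factorization_prod, Nat.factorization_mul_of_coprime hmn]
  exact Finsupp.prod_add_index_of_disjoint hmn.disjoint_primeFactors _

theorem Spart_prime_pow {p : ℕ} (hp : p.Prime) (k : ℕ) :
    Spart S (p ^ k) = if p ∈ S then p ^ k else 1 := by
  rw [Spart_eq_factorization_prod, hp.factorization_pow, Finsupp.prod_single_index (by simp)]

end Spart

noncomputable def psi (S : Set ℕ) [DecidablePred (· ∈ S)] : ArithmeticFunction ℤ :=
  ⟨fun d => (Nat.totient (Spart S d) : ℤ) * μ (d / Spart S d), by simp [Spart]⟩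

section psi

variable (S : Set ℕ) [DecidablePred (· ∈ S)]

theorem psi_apply (d : ℕ) : psi S d = (Nat.totient (Spart S d) : ℤ) * μ (d / Spart S d) := rfl

theorem isMultiplicative_psi : IsMultiplicative (psi S) := by
  refine ⟨by simp [psi_apply, Spart], fun {m n} hmn => ?_⟩
  have hcop : (Spart S m).Coprime (Spart S n) :=
    (hmn.coprime_dvd_left (Spart_dvd S m)).coprime_dvd_right (Spart_dvd S n)
  have hquot : (m / Spart S m).Coprime (n / Spart S n) :=
    (hmn.coprime_dvd_left (Nat.div_dvd_of_dvd (Spart_dvd S m))).coprime_dvd_right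
      (Nat.div_dvd_of_dvd (Spart_dvd S n))
  rw [psi_apply, psi_apply, psi_apply, Spart_mul S hmn,
    ← Nat.div_mul_div_comm (Spart_dvd S m) (Spart_dvd S n), Nat.totient_mul hcop,
    isMultiplicative_moebius.map_mul_of_coprime hquot]
  push_cast
  ring

theorem psi_prime_pow {p : ℕ} (hp : p.Prime) (k : ℕ) :
    psi S (p ^ k) = if p ∈ S then (φ (p ^ k) : ℤ) else μ (p ^ k) := by
  rw [psi_apply, Spart_prime_pow S hp]
  split_ifs <;> simp [Nat.div_self (pow_pos hp.pos k)]

theorem psi_mul_zeta_prime_pow {p k : ℕ} (hp : p.Prime) (hk : k ≠ 0) :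
    (psi S * ζ) (p ^ k) = if p ∈ S then (p : ℤ) ^ k else 0 := by
  have hdiv : ∀ d ∈ (p ^ k).divisors, psi S d = if p ∈ S then (φ d : ℤ) else μ d := by
    intro d hd
    obtain ⟨j, -, rfl⟩ := (Nat.dvd_prime_pow hp).mp (Nat.dvd_of_mem_divisors hd)
    exact psi_prime_pow S hp j
  rw [coe_mul_zeta_apply, sum_congr rfl hdiv]
  split_ifs
  · exact_mod_cast Nat.sum_totient (p ^ k)
  · rw [← coe_mul_zeta_apply, moebius_mul_coe_zeta, one_apply_ne (Nat.one_lt_pow hk hp.one_lt).ne']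

theorem psi_mul_zeta_apply {n : ℕ} (hn : n ≠ 0) :
    (psi S * ζ) n = if ∀ p ∈ n.primeFactors, p ∈ S then (n : ℤ) else 0 := by
  rw [((isMultiplicative_psi S).mul isMultiplicative_zeta.natCast).multiplicative_factorization _ hn,
    Finsupp.prod, Nat.support_factorization]
  calc ∏ p ∈ n.primeFactors, (psi S * ζ) (p ^ n.factorization p)
      = ∏ p ∈ n.primeFactors, if p ∈ S then (p : ℤ) ^ n.factorization p else 0 := by
        refine prod_congr rfl fun p hp => ?_
        have hp' := Nat.prime_of_mem_primeFactors hp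
        exact psi_mul_zeta_prime_pow S hp'
          (hp'.factorization_pos_of_dvd hn (Nat.dvd_of_mem_primeFactors hp)).ne'
    _ = _ := by
        rw [prod_ite_zero]
        congr
        exact_mod_cast Nat.prod_factorization_pow_eq_self hn

end psi

theorem Nat.filter_divisors_even_div {n : ℕ} (hn : Even n) :
    {d ∈ n.divisors | Even (n / d)} = (n / 2).divisors := by
  obtain ⟨m, rfl⟩ := hn
  ext d
  simp only [mem_filter, Nat.mem_divisors, ← two_mul, Nat.mul_div_cancel_left m two_pos]
  constructor
  · rintro ⟨⟨hd, hm⟩, k, hk⟩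
    refine ⟨⟨k, ?_⟩, by omega⟩
    have := Nat.div_mul_cancel hd
    rw [hk] at this
    linarith
  · rintro ⟨⟨k, rfl⟩, hm⟩
    have hd : d ≠ 0 := by rintro rfl; simp at hm
    refine ⟨⟨Dvd.intro (2 * k) (by ring), by positivity⟩, k, ?_⟩
    rw [show 2 * (d * k) = d * (2 * k) by ring, Nat.mul_div_cancel_left _ (Nat.pos_of_ne_zero hd)]
    ring

theorem Nat.filter_divisors_even_div_of_odd {n : ℕ} (hn : ¬Even n) :
    {d ∈ n.divisors | Even (n / d)} = ∅ := by
  refine filter_eq_empty_iff.mpr fun d hd heven => hn ?_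
  rw [← Nat.mul_div_cancel' (Nat.dvd_of_mem_divisors hd)]
  exact heven.mul_left d

theorem sum_divisors_mul_neg_one_pow {R : Type*} [CommRing R] (f : ℕ → R) (n : ℕ) :
    ∑ d ∈ n.divisors, f d * (-1) ^ (n / d)
      = 2 * (if Even n then ∑ d ∈ (n / 2).divisors, f d else 0) - ∑ d ∈ n.divisors, f d := by
  have hsign : ∀ k : ℕ, (-1 : R) ^ k = (if Even k then 2 else 0) - 1 := fun k => by
    rw [neg_one_pow_eq_ite]; split_ifs <;> ring
  simp only [hsign, mul_sub, mul_one, sum_sub_distrib, mul_ite, mul_zero, ← sum_filter, ← sum_mul]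
  split_ifs with hn
  · rw [Nat.filter_divisors_even_div hn, mul_comm]
  · rw [Nat.filter_divisors_even_div_of_odd hn, sum_empty, zero_mul]

open scoped Classical in
theorem sum_psi_neg_one_pow_two_not_mem_general (S : Set ℕ) [DecidablePred (· ∈ S)]
    (h2 : 2 ∉ S) (n : ℕ) (hn : 0 < n) :
    ∑ d ∈ n.divisors,
        (Nat.totient (Spart S d) : ℤ) * moebius (d / Spart S d) * (-1) ^ (n / d)
      = if ∀ p ∈ n.primeFactors, p ∈ S then -(n : ℤ)
        else if Even n ∧ ∀ p ∈ (n / 2).primeFactors, p ∈ S then (n : ℤ)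
        else 0 := by
  have hn0 : n ≠ 0 := hn.ne'
  simp only [← psi_apply, sum_divisors_mul_neg_one_pow, ← coe_mul_zeta_apply,
    psi_mul_zeta_apply S hn0]
  by_cases hev : Even n
  · have hnS : ¬∀ p ∈ n.primeFactors, p ∈ S := fun hnS =>
      h2 (hnS 2 (Nat.mem_primeFactors.mpr ⟨Nat.prime_two, hev.two_dvd, hn0⟩))
    have hhalf : 2 * ((n / 2 : ℕ) : ℤ) = n := by exact_mod_cast Nat.two_mul_div_two_of_even hev
    simp only [hev, hnS, true_and, if_true, if_false, psi_mul_zeta_apply S (show n / 2 ≠ 0 by omega)]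
    split_ifs
    · rw [hhalf, sub_zero]
    · ring
  · simp only [hev, false_and, if_false]
    split_ifs <;> ring

open scoped Classical in
theorem sum_psi_neg_one_pow_two_not_mem (S : Set ℕ) [DecidablePred (· ∈ S)]
    (hS : ∀ q ∈ S, Nat.Prime q) (h2 : 2 ∉ S) (n : ℕ) (hn : 0 < n) :
    ∑ d ∈ n.divisors,
        (Nat.totient (Spart S d) : ℤ) * moebius (d / Spart S d) * (-1) ^ (n / d)
      = if ∀ p ∈ n.primeFactors, p ∈ S then -(n : ℤ)
        else if Even n ∧ ∀ p ∈ (n / 2).primeFactors, p ∈ S then (n : ℤ)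
        else 0 :=
  sum_psi_neg_one_pow_two_not_mem_general S h2 n hn
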